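/- For the principal part integral, the residue computation holds: Res_{w=0} exp(2πnw + 2πy/(k²w)) = (1/k)·√(y/n)·I₁(4π√(ny)/k), where I₁ is the modified Bessel function of the first kind of order 1. -/

import Mathlib

/-!
Expanding `exp (a w) * exp (b / w)` as the double series `∑ (a w)^i / i! * (b / w)^j / j!`, which
is dominated on a circle around `0` by a summable series of constants, and integrating term by
term, only the terms with `j = i + 1` contribute, each with `2πi a^i b^(i+1) / (i! (i+1)!)`.
With `a = 2πn` and `b = 2πy/k²` this series is `(1/k) √(y/n) I₁(2√(ab))`, term by term,
since `√(b/a) (√(ab))^(2m+1) = a^m b^(m+1)`.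
-/

open scoped Real

/-- The modified Bessel function of the first kind of order 1,
`I₁(z) = ∑_{m≥0} (z/2)^{2m+1}/(m! (m+1)!)`. -/
noncomputable def besselI1 (z : ℝ) : ℝ :=
  ∑' m : ℕ, (z / 2) ^ (2 * m + 1) / ((m.factorial : ℝ) * ((m + 1).factorial : ℝ))

open scoped Nat

section CircleIntegral

open Complex Metric MeasureTheory Filter

theorem hasSum_circleIntegral_of_norm_le {E : Type*} [NormedAddCommGroup E] [NormedSpace ℂ E]
    [CompleteSpace E] {ι : Type*} [Countable ι] {F : ι → ℂ → E} {f : ℂ → E} {c : ℂ} {R : ℝ}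
    {C : ι → ℝ} (hF : ∀ i, CircleIntegrable (F i) c R) (hC : Summable C)
    (hFC : ∀ i, ∀ w ∈ sphere c |R|, ‖F i w‖ ≤ C i)
    (hFf : ∀ w ∈ sphere c |R|, HasSum (fun i ↦ F i w) (f w)) :
    HasSum (fun i ↦ ∮ w in C(c, R), F i w) (∮ w in C(c, R), f w) := by
  refine intervalIntegral.hasSum_integral_of_dominated_convergence
      (fun i _ ↦ |R| * C i) (fun i ↦ ?_) (fun i ↦ ?_) ?_ ?_ ?_
  · simp only [deriv_circleMap]
    exact ((continuous_circleMap 0 R).mul continuous_const).aestronglyMeasurable.smul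
      (hF i).def'.1
  · refine Eventually.of_forall fun θ _ ↦ ?_
    rw [deriv_circleMap, norm_smul, norm_mul, norm_circleMap_zero, norm_I, mul_one]
    exact mul_le_mul_of_nonneg_left (hFC i _ (circleMap_mem_sphere' c R θ)) (abs_nonneg R)
  · exact Eventually.of_forall fun _ _ ↦ hC.mul_left _
  · exact intervalIntegrable_const
  · exact Eventually.of_forall fun θ _ ↦ (hFf _ (circleMap_mem_sphere' c R θ)).const_smul _

theorem circleIntegral_sub_zpow (c : ℂ) {R : ℝ} (hR : 0 < R) (d : ℤ) :
    (∮ w in C(c, R), (w - c) ^ d) = if d = -1 then 2 * π * I else 0 := by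
  split_ifs with h
  · simpa [h] using circleIntegral.integral_sub_inv_of_mem_ball (mem_ball_self hR)
  · exact circleIntegral.integral_sub_zpow_of_ne h c c R

theorem hasSum_exp_add_prod (x y : ℂ) :
    HasSum (fun p : ℕ × ℕ ↦ x ^ p.1 / p.1 ! * (y ^ p.2 / p.2 !)) (exp (x + y)) := by
  have hexp (z : ℂ) : HasSum (fun n : ℕ ↦ z ^ n / (n ! : ℂ)) (exp z) := by
    rw [exp_eq_exp_ℂ]
    exact NormedSpace.expSeries_div_hasSum_exp z
  have hnorm (z : ℂ) : Summable fun n : ℕ ↦ ‖z ^ n / (n ! : ℂ)‖ := by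
    simpa [norm_pow] using Real.summable_pow_div_factorial ‖z‖
  have h := (hexp x).mul (hexp y) <|
    summable_mul_of_summable_norm (f := fun n : ℕ ↦ x ^ n / (n ! : ℂ))
      (g := fun n : ℕ ↦ y ^ n / (n ! : ℂ)) (hnorm x) (hnorm y)
  rwa [exp_add]

theorem circleIntegral_mul_pow_div_factorial_mul_div_pow_div_factorial (a b : ℂ) {R : ℝ}
    (hR : 0 < R) (i j : ℕ) :
    (∮ w in C(0, R), (a * w) ^ i / i ! * ((b / w) ^ j / j !))
      = if j = i + 1 then 2 * π * I * (a ^ i * b ^ (i + 1) / (i ! * (i + 1) !)) else 0 := by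
  have hterm : ∀ w ∈ sphere (0 : ℂ) R, (a * w) ^ i / i ! * ((b / w) ^ j / j !)
      = a ^ i * b ^ j / (i ! * j !) * (w - 0) ^ ((i : ℤ) - j) := fun w hw ↦ by
    have hw : w ≠ 0 := ne_of_mem_sphere hw hR.ne'
    rw [sub_zero, zpow_sub₀ hw, zpow_natCast, zpow_natCast, mul_pow, div_pow]
    field_simp
  rw [circleIntegral.integral_congr hR.le hterm, circleIntegral.integral_const_mul,
    circleIntegral_sub_zpow 0 hR]
  split_ifs with h h' h'
  · subst h'; ring
  · omega
  · omega
  · simp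

theorem hasSum_circleIntegral_exp_mul_add_div (a b : ℂ) {R : ℝ} (hR : 0 < R) :
    HasSum (fun m : ℕ ↦ 2 * π * I * (a ^ m * b ^ (m + 1) / (m ! * (m + 1) !)))
      (∮ w in C(0, R), exp (a * w + b / w)) := by
  have hcont (p : ℕ × ℕ) : CircleIntegrable
      (fun w ↦ (a * w) ^ p.1 / p.1 ! * ((b / w) ^ p.2 / p.2 !)) 0 R := by
    refine ContinuousOn.circleIntegrable hR.le ?_
    refine ContinuousOn.mul (by fun_prop) (ContinuousOn.div_const ?_ _)
    exact ((continuousOn_const.div continuousOn_id) fun w hw ↦ ne_of_mem_sphere hw hR.ne').pow _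
  have hbound (p : ℕ × ℕ) (w : ℂ) (hw : w ∈ sphere (0 : ℂ) |R|) :
      ‖(a * w) ^ p.1 / p.1 ! * ((b / w) ^ p.2 / p.2 !)‖
        ≤ (‖a‖ * R) ^ p.1 / p.1 ! * ((‖b‖ / R) ^ p.2 / p.2 !) := by
    rw [mem_sphere_zero_iff_norm, abs_of_pos hR] at hw
    simp [norm_pow, hw]
  have hsummable :
      Summable fun p : ℕ × ℕ ↦ (‖a‖ * R) ^ p.1 / p.1 ! * ((‖b‖ / R) ^ p.2 / p.2 !) :=
    (Real.summable_pow_div_factorial _).mul_of_nonneg (Real.summable_pow_div_factorial _)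
      (fun _ ↦ by positivity) (fun _ ↦ by positivity)
  have hsum := hasSum_circleIntegral_of_norm_le hcont hsummable hbound
    (fun w _ ↦ hasSum_exp_add_prod (a * w) (b / w))
  simp only [circleIntegral_mul_pow_div_factorial_mul_div_pow_div_factorial a b hR] at hsum
  have hinj : Function.Injective fun m : ℕ ↦ (m, m + 1) := fun m m' h ↦ (Prod.ext_iff.mp h).1
  refine (hinj.hasSum_iff ?_).mpr hsum |>.congr_fun fun m ↦ by simp
  rintro ⟨i, j⟩ hij
  rw [if_neg fun h ↦ hij ⟨i, by simp_all⟩]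

end CircleIntegral

theorem tsum_pow_mul_pow_succ_div_factorial_mul_factorial {P Q : ℝ} (hP : 0 < P) (hQ : 0 ≤ Q) :
    ∑' m : ℕ, P ^ m * Q ^ (m + 1) / (m ! * (m + 1) !) = √(Q / P) * besselI1 (2 * √(P * Q)) := by
  have hsqrt : √(Q / P) * √(P * Q) = Q := by
    rw [← Real.sqrt_mul (div_nonneg hQ hP.le), show Q / P * (P * Q) = Q ^ 2 by field_simp,
      Real.sqrt_sq hQ]
  rw [besselI1, ← tsum_mul_left]
  congr 1 with m
  rw [mul_div_cancel_left₀ _ two_ne_zero, pow_succ _ (2 * m), pow_mul, Real.sq_sqrt (by positivity)]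
  linear_combination (P * Q) ^ m / (m ! * (m + 1) !) * hsqrt.symm

theorem residue_exp_eq_besselI1_general (n k : ℕ) (hn : 0 < n) (y : ℝ) (hy : 0 < y) :
    (2 * (Real.pi : ℂ) * Complex.I)⁻¹
        * (∮ w in C(0, 1), Complex.exp (2 * (Real.pi : ℂ) * n * w
            + 2 * (Real.pi : ℂ) * (y : ℂ) / ((k : ℂ) ^ 2 * w)))
      = ((1 / (k : ℝ)) * Real.sqrt (y / n)
          * besselI1 (4 * Real.pi * Real.sqrt ((n : ℝ) * y) / k) : ℝ) := by
  set P : ℝ := 2 * π * n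
  set Q : ℝ := 2 * π * y / k ^ 2
  have hP : 0 < P := by positivity
  have hQ : 0 ≤ Q := by positivity
  have hintegrand : (fun w : ℂ ↦ Complex.exp (2 * (π : ℂ) * n * w
      + 2 * (π : ℂ) * (y : ℂ) / ((k : ℂ) ^ 2 * w))) = fun w ↦ Complex.exp (P * w + Q / w) := by
    funext w
    push_cast [P, Q]
    rw [div_div]
  have hsqrt_div : √(Q / P) = 1 / k * √(y / n) := by
    rw [show Q / P = y / n / k ^ 2 by simp only [P, Q]; field_simp,
      Real.sqrt_div' _ (sq_nonneg _), Real.sqrt_sq (Nat.cast_nonneg k), one_div_mul_eq_div]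
  have hsqrt_mul : 2 * √(P * Q) = 4 * π * √(n * y) / k := by
    rw [show P * Q = n * y * (2 * π / k) ^ 2 by ring, Real.sqrt_mul' _ (sq_nonneg _),
      Real.sqrt_sq (by positivity)]
    ring
  rw [hintegrand, ← (hasSum_circleIntegral_exp_mul_add_div P Q one_pos).tsum_eq, tsum_mul_left,
    inv_mul_cancel_left₀ Complex.two_pi_I_ne_zero, ← hsqrt_div, ← hsqrt_mul,
    ← tsum_pow_mul_pow_succ_div_factorial_mul_factorial hP hQ]
  push_cast [Complex.ofReal_tsum]
  rfl

/-- The residue at `w = 0` of `exp(2πnw + 2πy/(k²w))` (computed as a circle integral)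
equals `(1/k)·√(y/n)·I₁(4π√(ny)/k)`. -/
theorem residue_exp_eq_besselI1 (n k : ℕ) (hn : 0 < n) (hk : 0 < k) (y : ℝ) (hy : 0 < y) :
    (2 * (Real.pi : ℂ) * Complex.I)⁻¹
        * (∮ w in C(0, 1), Complex.exp (2 * (Real.pi : ℂ) * n * w
            + 2 * (Real.pi : ℂ) * (y : ℂ) / ((k : ℂ) ^ 2 * w)))
      = ((1 / (k : ℝ)) * Real.sqrt (y / n)
          * besselI1 (4 * Real.pi * Real.sqrt ((n : ℝ) * y) / k) : ℝ) :=
  residue_exp_eq_besselI1_general n k hn y hy
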